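/- Fix real numbers β₁, β₂ and define the free-energy functional Ψ(g) = -I(g) + β₁·e(g) + β₂·t(g) on graphons. If a graphon g* is a maximizer of Ψ, i.e. Ψ(g') ≤ Ψ(g*) for every graphon g', then t(g*) ≤ e(g*)³. -/

import Mathlib

open MeasureTheory Set

/-- `I₀(u) = (1/2)[u ln u + (1-u) ln(1-u)]`; since `Real.log 0 = 0`,
this automatically satisfies the continuous extension `I₀(0) = I₀(1) = 0`. -/
noncomputable def I0 (u : ℝ) : ℝ :=
  (1/2) * (u * Real.log u + (1 - u) * Real.log (1 - u))

/-- A graphon: a measurable function `[0,1]² → [0,1]`, symmetric on `[0,1]²`. -/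
def IsGraphon (g : ℝ → ℝ → ℝ) : Prop :=
  Measurable (Function.uncurry g) ∧
  (∀ x ∈ Icc (0:ℝ) 1, ∀ y ∈ Icc (0:ℝ) 1, g x y = g y x) ∧
  (∀ x ∈ Icc (0:ℝ) 1, ∀ y ∈ Icc (0:ℝ) 1, g x y ∈ Icc (0:ℝ) 1)

/-- Edge density `e(g) = ∫∫ g`. -/
noncomputable def edgeDensity (g : ℝ → ℝ → ℝ) : ℝ :=
  ∫ x in Icc (0:ℝ) 1, ∫ y in Icc (0:ℝ) 1, g x y

/-- Triangle density `t(g) = ∫∫∫ g(x,y) g(y,z) g(z,x)`. -/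
noncomputable def triangleDensity (g : ℝ → ℝ → ℝ) : ℝ :=
  ∫ x in Icc (0:ℝ) 1, ∫ y in Icc (0:ℝ) 1, ∫ z in Icc (0:ℝ) 1,
    g x y * g y z * g z x

/-- Rate function `I(g) = ∫∫ I₀(g(x,y))`. -/
noncomputable def rateFn (g : ℝ → ℝ → ℝ) : ℝ :=
  ∫ x in Icc (0:ℝ) 1, ∫ y in Icc (0:ℝ) 1, I0 (g x y)

/-!
Only constant competitors are needed. Write `e`, `t` for the densities of `g*` and
`φ(u) = β₁ u + β₂ u³ - I₀(u)`.

If `β₂ ≤ 0`, compare `g*` with the constant `e`: by strict Jensen for the strictly convex `I₀`,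
either `g*` is a.e. constant (and then `t = e³`), or `I₀(e) < I(g*)`, and maximality gives
`β₂ e³ < β₂ t`, i.e. `t < e³`.

If `β₂ > 0`, let `u₀` maximize `φ` on `[0,1]`. Then `Ψ(g*) = ∫∫ φ(g*) - β₂ (∫∫ g*³ - t)` and
`∫∫ φ(g*) ≤ φ(u₀) = Ψ(u₀) ≤ Ψ(g*)`, so `∫∫ g*³ ≤ t`. AM–GM on the three edges of a triangle,
`3 g(x,y) g(y,z) g(z,x) ≤ g(x,y)³ + g(y,z)³ + g(z,x)³`, integrates to `t ≤ ∫∫ g*³`, so equality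
holds a.e.; hence `g*(x,y) = g*(y,z)` for a.e. `(x,y,z)`, and `g*` is a.e. constant.

The argument runs for `[0,1]`-valued kernels on any probability space, with the densities written
as integrals against product measures; a graphon enters through its restriction to `I`.
-/

open scoped unitInterval

lemma I0_eq_neg_binEntropy_div_two (u : ℝ) : I0 u = -Real.binEntropy u / 2 := by
  rw [I0, Real.binEntropy, Real.log_inv, Real.log_inv]
  ring

@[fun_prop]
lemma continuous_I0 : Continuous I0 :=
  (Real.binEntropy_continuous.neg.div_const 2).congr fun u =>
    (I0_eq_neg_binEntropy_div_two u).symm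

lemma three_mul_mul_mul_le_sum_pow_three {a b c : ℝ} (ha : 0 ≤ a) (hb : 0 ≤ b) (hc : 0 ≤ c) :
    3 * (a * b * c) ≤ a ^ 3 + b ^ 3 + c ^ 3 := by
  nlinarith [mul_nonneg (add_nonneg (add_nonneg ha hb) hc)
    (add_nonneg (add_nonneg (sq_nonneg (a - b)) (sq_nonneg (b - c))) (sq_nonneg (c - a)))]

lemma eq_of_sum_pow_three_eq_three_mul_mul_mul {a b c : ℝ} (ha : 0 ≤ a) (hb : 0 ≤ b) (hc : 0 ≤ c)
    (h : a ^ 3 + b ^ 3 + c ^ 3 = 3 * (a * b * c)) : a = b := by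
  have key : (a + b + c) * ((a - b) ^ 2 + (b - c) ^ 2 + (c - a) ^ 2) = 0 := by
    linear_combination 2 * h
  rcases mul_eq_zero.1 key with hsum | hsq
  · linarith
  · nlinarith [sq_nonneg (a - b), sq_nonneg (b - c), sq_nonneg (c - a)]

theorem MeasureTheory.MeasurePreserving.integral_comp_of_aestronglyMeasurable
    {α β G : Type*} [MeasurableSpace α] [MeasurableSpace β] [NormedAddCommGroup G]
    [NormedSpace ℝ G] {μ : Measure α} {ν : Measure β} {f : α → β} (h : MeasurePreserving f μ ν)
    {g : β → G} (hg : AEStronglyMeasurable g ν) :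
    ∫ x, g (f x) ∂μ = ∫ y, g y ∂ν := by
  rw [← h.map_eq] at hg ⊢
  exact (integral_map h.aemeasurable hg).symm

lemma Continuous.integrable_comp_of_isCompact {β : Type*} [MeasurableSpace β] {ν : Measure β}
    [IsFiniteMeasure ν] {φ : ℝ → ℝ} (hφ : Continuous φ) {K : Set ℝ} (hK : IsCompact K)
    {f : β → ℝ} (hf : Measurable f) (hfK : ∀ x, f x ∈ K) : Integrable (fun x => φ (f x)) ν := by
  obtain ⟨C, hC⟩ := hK.exists_bound_of_continuousOn hφ.continuousOn
  exact .of_bound (hφ.measurable.comp hf).aestronglyMeasurable C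
    (ae_of_all _ fun x => hC _ (hfK x))

lemma exists_ae_eq_const_of_ae_eq_shift {α β : Type*} [MeasurableSpace α] {μ : Measure α}
    [NeZero μ] {W : α → α → β} (h : ∀ᵐ x ∂μ, ∀ᵐ y ∂μ, ∀ᵐ z ∂μ, W x y = W y z) :
    ∃ c, ∀ᵐ x ∂μ, ∀ᵐ y ∂μ, W x y = c := by
  obtain ⟨x₀, hx₀⟩ := h.exists
  have hrow : ∀ᵐ x ∂μ, ∀ᵐ y ∂μ, W x y = W x₀ x :=
    hx₀.mono fun x hx => hx.mono fun y hy => hy.symm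
  have hx₀_row : ∀ᵐ x ∂μ, ∀ᵐ y ∂μ, W x₀ x = W x₀ y := by
    filter_upwards [h, hrow] with x hx hrx
    filter_upwards [hx, hrx, hrow] with y hxy hrxy hry
    obtain ⟨z, hxyz, hyz⟩ := (hxy.and hry).exists
    rw [← hrxy, hxyz, hyz]
  obtain ⟨x₁, hx₁⟩ := hx₀_row.exists
  refine ⟨W x₀ x₁, ?_⟩
  filter_upwards [hrow, hx₁] with x hx hx₁x
  filter_upwards [hx] with y hy
  rw [hy, hx₁x]

section KernelDensities

variable {α : Type*} [MeasurableSpace α]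

noncomputable def edgeDensityOn (μ : Measure α) (W : α → α → ℝ) : ℝ :=
  ∫ p, W p.1 p.2 ∂μ.prod μ

noncomputable def triangleDensityOn (μ : Measure α) (W : α → α → ℝ) : ℝ :=
  ∫ p, W p.1 p.2.1 * W p.2.1 p.2.2 * W p.2.2 p.1 ∂μ.prod (μ.prod μ)

noncomputable def rateFnOn (μ : Measure α) (W : α → α → ℝ) : ℝ :=
  ∫ p, I0 (W p.1 p.2) ∂μ.prod μ

variable {μ : Measure α} [IsProbabilityMeasure μ] {W : α → α → ℝ}

lemma measurePreserving_triangle_edges :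
    MeasurePreserving (fun p : α × α × α => (p.1, p.2.1)) (μ.prod (μ.prod μ)) (μ.prod μ) ∧
    MeasurePreserving (fun p : α × α × α => (p.2.1, p.2.2)) (μ.prod (μ.prod μ)) (μ.prod μ) ∧
    MeasurePreserving (fun p : α × α × α => (p.2.2, p.1)) (μ.prod (μ.prod μ)) (μ.prod μ) :=
  ⟨(MeasurePreserving.id μ).prod measurePreserving_fst, measurePreserving_snd,
    Measure.measurePreserving_swap.comp ((MeasurePreserving.id μ).prod measurePreserving_snd)⟩

lemma triangleDensityOn_eq_edgeDensityOn_pow_of_ae_eq {c : ℝ}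
    (h : ∀ᵐ p ∂μ.prod μ, W p.1 p.2 = c) :
    triangleDensityOn μ W = edgeDensityOn μ W ^ 3 := by
  obtain ⟨h₁, h₂, h₃⟩ := measurePreserving_triangle_edges (μ := μ)
  have hcycle : ∀ᵐ p ∂μ.prod (μ.prod μ), W p.1 p.2.1 * W p.2.1 p.2.2 * W p.2.2 p.1 = c ^ 3 := by
    filter_upwards [h₁.quasiMeasurePreserving.ae h, h₂.quasiMeasurePreserving.ae h,
      h₃.quasiMeasurePreserving.ae h] with p e₁ e₂ e₃
    rw [e₁, e₂, e₃]
    ring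
  rw [triangleDensityOn, edgeDensityOn, integral_congr_ae hcycle, integral_congr_ae h]
  simp

variable (hW : Measurable (Function.uncurry W)) (hW01 : ∀ x y, W x y ∈ Icc (0 : ℝ) 1)
include hW hW01

lemma integrable_comp_of_continuous {φ : ℝ → ℝ} (hφ : Continuous φ) :
    Integrable (fun p : α × α => φ (W p.1 p.2)) (μ.prod μ) :=
  hφ.integrable_comp_of_isCompact isCompact_Icc hW fun _ => hW01 _ _

lemma integrable_triangleDensityOn_integrand :
    Integrable (fun p : α × α × α => W p.1 p.2.1 * W p.2.1 p.2.2 * W p.2.2 p.1)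
      (μ.prod (μ.prod μ)) := by
  have hW₁ : Measurable fun p : α × α × α => W p.1 p.2.1 :=
    hW.comp (measurable_fst.prodMk measurable_snd.fst)
  have hW₂ : Measurable fun p : α × α × α => W p.2.1 p.2.2 := hW.comp measurable_snd
  have hW₃ : Measurable fun p : α × α × α => W p.2.2 p.1 :=
    hW.comp (measurable_snd.snd.prodMk measurable_fst)
  exact .of_mem_Icc 0 1 ((hW₁.mul hW₂).mul hW₃).aemeasurable <| ae_of_all _ fun p =>
    unitInterval.mul_mem (unitInterval.mul_mem (hW01 _ _) (hW01 _ _)) (hW01 _ _)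

lemma exists_ae_eq_const_of_integral_cube_le_triangleDensityOn
    (h : ∫ p, W p.1 p.2 ^ 3 ∂μ.prod μ ≤ triangleDensityOn μ W) :
    ∃ c, ∀ᵐ p ∂μ.prod μ, W p.1 p.2 = c := by
  obtain ⟨h₁, h₂, h₃⟩ := measurePreserving_triangle_edges (μ := μ)
  have hcube : AEStronglyMeasurable (fun q : α × α => W q.1 q.2 ^ 3) (μ.prod μ) :=
    (hW.pow_const 3).aestronglyMeasurable
  have hint : ∀ {e : α × α × α → α × α}, Measurable e →
      Integrable (fun p => W (e p).1 (e p).2 ^ 3) (μ.prod (μ.prod μ)) := fun he =>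
    (continuous_pow 3).integrable_comp_of_isCompact isCompact_Icc (hW.comp he) fun _ => hW01 _ _
  have i₁ : Integrable (fun p : α × α × α => W p.1 p.2.1 ^ 3) _ := hint h₁.measurable
  have i₁₂ : Integrable (fun p : α × α × α => W p.1 p.2.1 ^ 3 + W p.2.1 p.2.2 ^ 3) _ :=
    i₁.add (hint h₂.measurable)
  have icubes : Integrable (fun p : α × α × α =>
      W p.1 p.2.1 ^ 3 + W p.2.1 p.2.2 ^ 3 + W p.2.2 p.1 ^ 3) (μ.prod (μ.prod μ)) :=
    i₁₂.add (hint h₃.measurable)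
  have hcubes : ∫ p, (W p.1 p.2.1 ^ 3 + W p.2.1 p.2.2 ^ 3 + W p.2.2 p.1 ^ 3) ∂μ.prod (μ.prod μ)
      = 3 * ∫ p, W p.1 p.2 ^ 3 ∂μ.prod μ := by
    rw [integral_add i₁₂ (hint h₃.measurable), integral_add i₁ (hint h₂.measurable),
      h₁.integral_comp_of_aestronglyMeasurable hcube,
      h₂.integral_comp_of_aestronglyMeasurable hcube,
      h₃.integral_comp_of_aestronglyMeasurable hcube]
    ring
  have icycle := (integrable_triangleDensityOn_integrand (μ := μ) hW hW01).const_mul 3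
  have hamgm : (fun p : α × α × α => 3 * (W p.1 p.2.1 * W p.2.1 p.2.2 * W p.2.2 p.1))
      ≤ᵐ[μ.prod (μ.prod μ)] fun p => W p.1 p.2.1 ^ 3 + W p.2.1 p.2.2 ^ 3 + W p.2.2 p.1 ^ 3 :=
    ae_of_all _ fun p =>
      three_mul_mul_mul_le_sum_pow_three (hW01 _ _).1 (hW01 _ _).1 (hW01 _ _).1
  have hshift : ∀ᵐ p ∂μ.prod (μ.prod μ), W p.1 p.2.1 = W p.2.1 p.2.2 := by
    refine ((integral_eq_iff_of_ae_le icycle icubes hamgm).1 ?_).mono fun p hp =>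
      eq_of_sum_pow_three_eq_three_mul_mul_mul (hW01 _ _).1 (hW01 _ _).1 (hW01 _ _).1 hp.symm
    have hle := integral_mono_ae icycle icubes hamgm
    rw [integral_const_mul, hcubes] at hle ⊢
    rw [triangleDensityOn] at h
    exact le_antisymm hle (by linarith)
  obtain ⟨c, hc⟩ := exists_ae_eq_const_of_ae_eq_shift (μ := μ) (W := W) <|
    (Measure.ae_ae_of_ae_prod hshift).mono fun x hx => Measure.ae_ae_of_ae_prod hx
  exact ⟨c, (Measure.ae_prod_iff_ae_ae (measurableSet_eq_fun hW measurable_const)).2 hc⟩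

lemma ae_eq_edgeDensityOn_or_I0_edgeDensityOn_lt_rateFnOn :
    (∀ᵐ p ∂μ.prod μ, W p.1 p.2 = edgeDensityOn μ W) ∨ I0 (edgeDensityOn μ W) < rateFnOn μ W := by
  have hjensen := Real.strictConcave_binEntropy.ae_eq_const_or_lt_map_average
    Real.binEntropy_continuous.continuousOn isClosed_Icc (μ := μ.prod μ) (f := fun p => W p.1 p.2)
    (ae_of_all _ fun p => hW01 p.1 p.2)
    (integrable_comp_of_continuous hW hW01 continuous_id')
    (integrable_comp_of_continuous hW hW01 Real.binEntropy_continuous)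
  simp only [average_eq_integral] at hjensen
  refine hjensen.imp id fun hlt => ?_
  simp only [rateFnOn, edgeDensityOn, I0_eq_neg_binEntropy_div_two, integral_div, integral_neg]
  linarith

variable {β₁ β₂ : ℝ}
  (hconst : ∀ c ∈ Icc (0 : ℝ) 1, -I0 c + β₁ * c + β₂ * c ^ 3 ≤
    -rateFnOn μ W + β₁ * edgeDensityOn μ W + β₂ * triangleDensityOn μ W)
include hconst

lemma triangleDensityOn_le_of_nonpos_of_forall_const_le (hβ₂ : β₂ ≤ 0) :
    triangleDensityOn μ W ≤ edgeDensityOn μ W ^ 3 := by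
  rcases ae_eq_edgeDensityOn_or_I0_edgeDensityOn_lt_rateFnOn (μ := μ) hW hW01 with hae | hlt
  · exact (triangleDensityOn_eq_edgeDensityOn_pow_of_ae_eq hae).le
  · have he : edgeDensityOn μ W ∈ Icc (0 : ℝ) 1 :=
      Convex.integral_mem (μ := μ.prod μ) (convex_Icc 0 1) isClosed_Icc
        (ae_of_all _ fun _ => hW01 _ _) (integrable_comp_of_continuous hW hW01 continuous_id')
    nlinarith [hconst _ he]

lemma triangleDensityOn_le_of_pos_of_forall_const_le (hβ₂ : 0 < β₂) :
    triangleDensityOn μ W ≤ edgeDensityOn μ W ^ 3 := by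
  set φ : ℝ → ℝ := fun u => β₁ * u + β₂ * u ^ 3 - I0 u with hφ
  have hφc : Continuous φ := by fun_prop
  obtain ⟨u₀, hu₀, hmax⟩ :=
    isCompact_Icc.exists_isMaxOn (nonempty_Icc.2 zero_le_one) hφc.continuousOn
  have hφW : ∫ p, φ (W p.1 p.2) ∂μ.prod μ ≤ φ u₀ :=
    calc ∫ p, φ (W p.1 p.2) ∂μ.prod μ ≤ ∫ _p, φ u₀ ∂μ.prod μ :=
          integral_mono (integrable_comp_of_continuous hW hW01 hφc)
            (integrable_const _) fun p => hmax (hW01 p.1 p.2)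
      _ = φ u₀ := by simp
  have hsplit : ∫ p, φ (W p.1 p.2) ∂μ.prod μ =
      β₁ * edgeDensityOn μ W + β₂ * ∫ p, W p.1 p.2 ^ 3 ∂μ.prod μ - rateFnOn μ W := by
    have i₁ : Integrable (fun p : α × α => β₁ * W p.1 p.2) (μ.prod μ) :=
      (integrable_comp_of_continuous hW hW01 continuous_id').const_mul _
    have i₂ : Integrable (fun p : α × α => β₂ * W p.1 p.2 ^ 3) (μ.prod μ) :=
      (integrable_comp_of_continuous hW hW01 (continuous_pow 3)).const_mul _
    have i₃ : Integrable (fun p : α × α => I0 (W p.1 p.2)) (μ.prod μ) :=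
      integrable_comp_of_continuous hW hW01 continuous_I0
    have i₁₂ : Integrable (fun p : α × α => β₁ * W p.1 p.2 + β₂ * W p.1 p.2 ^ 3) (μ.prod μ) :=
      i₁.add i₂
    simp only [hφ]
    rw [integral_sub i₁₂ i₃, integral_add i₁ i₂, integral_const_mul, integral_const_mul]
    rfl
  obtain ⟨c, hc⟩ := exists_ae_eq_const_of_integral_cube_le_triangleDensityOn hW hW01 <|
    le_of_mul_le_mul_left (by linarith [hconst u₀ hu₀]) hβ₂
  exact (triangleDensityOn_eq_edgeDensityOn_pow_of_ae_eq hc).le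

theorem triangleDensityOn_le_edgeDensityOn_pow_of_forall_const_le :
    triangleDensityOn μ W ≤ edgeDensityOn μ W ^ 3 :=
  (le_or_gt β₂ 0).elim (triangleDensityOn_le_of_nonpos_of_forall_const_le hW hW01 hconst)
    (triangleDensityOn_le_of_pos_of_forall_const_le hW hW01 hconst)

end KernelDensities

section UnitInterval

lemma setIntegral_Icc_setIntegral_Icc_eq_integral_prod {F : ℝ → ℝ → ℝ}
    (hF : Integrable (fun p : I × I => F p.1 p.2) (volume.prod volume)) :
    ∫ x in Icc (0 : ℝ) 1, ∫ y in Icc (0 : ℝ) 1, F x y =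
      ∫ p : I × I, F p.1 p.2 ∂(volume.prod volume) := by
  rw [integral_prod _ hF, ← integral_subtype measurableSet_Icc]
  exact integral_congr_ae (ae_of_all _ fun x => (integral_subtype measurableSet_Icc _).symm)

lemma setIntegral_Icc_setIntegral_Icc_setIntegral_Icc_eq_integral_prod {F : ℝ → ℝ → ℝ → ℝ}
    (hF : Integrable (fun p : I × I × I => F p.1 p.2.1 p.2.2)
      (volume.prod (volume.prod volume))) :
    ∫ x in Icc (0 : ℝ) 1, ∫ y in Icc (0 : ℝ) 1, ∫ z in Icc (0 : ℝ) 1, F x y z =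
      ∫ p : I × I × I, F p.1 p.2.1 p.2.2 ∂(volume.prod (volume.prod volume)) := by
  rw [integral_prod _ hF, ← integral_subtype measurableSet_Icc]
  refine integral_congr_ae ?_
  filter_upwards [hF.prod_right_ae] with x hx
  exact setIntegral_Icc_setIntegral_Icc_eq_integral_prod hx

variable {g : ℝ → ℝ → ℝ} (hW : Measurable (Function.uncurry fun x y : I => g x y))
  (hW01 : ∀ x y : I, g x y ∈ Icc (0 : ℝ) 1)
include hW hW01

lemma edgeDensity_eq_edgeDensityOn : edgeDensity g = edgeDensityOn volume fun x y : I => g x y :=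
  setIntegral_Icc_setIntegral_Icc_eq_integral_prod <|
    integrable_comp_of_continuous hW hW01 continuous_id'

lemma rateFn_eq_rateFnOn : rateFn g = rateFnOn volume fun x y : I => g x y :=
  setIntegral_Icc_setIntegral_Icc_eq_integral_prod <|
    integrable_comp_of_continuous hW hW01 continuous_I0

lemma triangleDensity_eq_triangleDensityOn :
    triangleDensity g = triangleDensityOn volume fun x y : I => g x y :=
  setIntegral_Icc_setIntegral_Icc_setIntegral_Icc_eq_integral_prod <|
    integrable_triangleDensityOn_integrand hW hW01

end UnitInterval

lemma edgeDensity_const (c : ℝ) : edgeDensity (fun _ _ => c) = c := by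
  simp [edgeDensity]

lemma triangleDensity_const (c : ℝ) : triangleDensity (fun _ _ => c) = c ^ 3 := by
  simp [triangleDensity, pow_three, mul_assoc]

lemma rateFn_const (c : ℝ) : rateFn (fun _ _ => c) = I0 c := by
  simp [rateFn]

/-- Any graphon maximizing the free energy `Ψ(g) = -I(g) + β₁ e(g) + β₂ t(g)`
satisfies `t(g) ≤ e(g)³`. -/
theorem maximizer_triangle_le (β₁ β₂ : ℝ) (gstar : ℝ → ℝ → ℝ)
    (hg : IsGraphon gstar)
    (hmax : ∀ g' : ℝ → ℝ → ℝ, IsGraphon g' →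
      -rateFn g' + β₁ * edgeDensity g' + β₂ * triangleDensity g' ≤
        -rateFn gstar + β₁ * edgeDensity gstar + β₂ * triangleDensity gstar) :
    triangleDensity gstar ≤ (edgeDensity gstar) ^ 3 := by
  obtain ⟨hm, -, hbd⟩ := hg
  have hW : Measurable (Function.uncurry fun x y : I => gstar x y) :=
    hm.comp (measurable_subtype_coe.prodMap measurable_subtype_coe)
  have hW01 : ∀ x y : I, gstar x y ∈ Icc (0 : ℝ) 1 := fun x y => hbd x x.2 y y.2
  rw [triangleDensity_eq_triangleDensityOn hW hW01, edgeDensity_eq_edgeDensityOn hW hW01]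
  refine triangleDensityOn_le_edgeDensityOn_pow_of_forall_const_le (β₁ := β₁) (β₂ := β₂) hW hW01
    fun c hc => ?_
  have hconst := hmax (fun _ _ => c) ⟨measurable_const, fun _ _ _ _ => rfl, fun _ _ _ _ => hc⟩
  rwa [rateFn_const, edgeDensity_const, triangleDensity_const, rateFn_eq_rateFnOn hW hW01,
    edgeDensity_eq_edgeDensityOn hW hW01, triangleDensity_eq_triangleDensityOn hW hW01] at hconst
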